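/- arXiv:0808.4067 — 2 statements merged into one kernel-verified Lean document; each statement's English description precedes it below -/
import Mathlib

section
/- Let (X_t) be a Galton–Watson process with Poisson(1+ε) offspring started with one particle, where 0 < ε < 1/10. If t ≥ 1 satisfies εt < 1/10, then E(e^{|X_t|/(20t)}) ≤ 1 + 1/(10t), and consequently P(|X_t| ≥ N) ≤ t^{−1} e^{−N/(20t)} for all N ≥ 20t. -/
open ProbabilityTheory
open scoped NNReal ENNReal

/-- Generation sizes of a Galton–Watson process with Poisson(r) offspring distribution,
started from `N` particles. -/
noncomputable def gwPoisson (r : NNReal) (N : ℕ) : ℕ → PMF ℕ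
  | 0 => PMF.pure N
  | t + 1 => (gwPoisson r N t).bind fun k => poissonPMF (r * (k : NNReal))

/-! `E s^{X_t} = f^[t] s` for the Poisson generating function `f x = exp (r (x - 1))`.
On `[1, 1 + 1/(10t)]` we have `f x - 1 ≤ L (x - 1)` with `L = r e^{r/(10t)} ≤ e^{ε + r/(10t)}`, so
the iterates started at `e^{1/(20t)}`, which is within `e^{1/20}/(20t)` of `1`, stay within
`e^{1/20 + εt + r/10}/(20t) ≤ 2/(20t)` of `1` for `t` steps. The tail bound is Markov's
inequality for `e^{X_t/(20t)} - 1`. -/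

lemma Real.exp_sub_one_le_mul_exp (x : ℝ) : Real.exp x - 1 ≤ x * Real.exp x := by
  have h := Real.one_sub_le_exp_neg x
  have hx := Real.exp_pos x
  have : Real.exp (-x) * Real.exp x = 1 := by rw [← Real.exp_add, neg_add_cancel, Real.exp_zero]
  nlinarith

lemma PMF.tsum_mul_bind_apply {α β : Type*} (p : PMF α) (f : α → PMF β) (g : β → ℝ≥0∞) :
    ∑' b, g b * p.bind f b = ∑' a, p a * ∑' b, g b * f a b := by
  simp_rw [PMF.bind_apply, ← ENNReal.tsum_mul_left]
  rw [ENNReal.tsum_comm]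
  exact tsum_congr fun a => tsum_congr fun b => mul_left_comm _ _ _

/-- Markov's inequality for `g - 1`, stated without subtraction. -/
lemma PMF.mul_toMeasure_add_one_le_tsum_mul {α : Type*} [MeasurableSpace α] (p : PMF α)
    {g : α → ℝ≥0∞} {s : Set α} {c : ℝ≥0∞} (hs : MeasurableSet s) (hg : ∀ a, 1 ≤ g a)
    (hgs : ∀ a ∈ s, 1 + c ≤ g a) :
    c * p.toMeasure s + 1 ≤ ∑' a, g a * p a := by
  rw [p.toMeasure_apply hs, ← p.tsum_coe, ← ENNReal.tsum_mul_left, ← ENNReal.tsum_add]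
  refine ENNReal.tsum_le_tsum fun a => ?_
  by_cases ha : a ∈ s
  · rw [Set.indicator_of_mem ha, ← add_one_mul, add_comm c]
    gcongr
    exact hgs a ha
  · rw [Set.indicator_of_notMem ha, mul_zero, zero_add]
    exact le_mul_of_one_le_left (by positivity) (hg a)

lemma PMF.exp_sub_one_mul_toReal_toMeasure_le (p : PMF ℕ) {θ M : ℝ} (hθ : 0 ≤ θ) (hM : 0 ≤ M)
    (hp : ∑' k : ℕ, ENNReal.ofReal (Real.exp (k * θ)) * p k ≤ ENNReal.ofReal (1 + M)) (N : ℕ) :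
    (Real.exp (N * θ) - 1) * (p.toMeasure {k | N ≤ k}).toReal ≤ M := by
  have hN : 1 ≤ Real.exp (N * θ) := Real.one_le_exp (by positivity)
  have hg (k : ℕ) : 1 ≤ ENNReal.ofReal (Real.exp (k * θ)) :=
    ENNReal.one_le_ofReal.mpr (Real.one_le_exp (by positivity))
  have hgs (k : ℕ) (hk : k ∈ {k | N ≤ k}) :
      1 + ENNReal.ofReal (Real.exp (N * θ) - 1) ≤ ENNReal.ofReal (Real.exp (k * θ)) := by
    rw [← ENNReal.ofReal_one, ← ENNReal.ofReal_add zero_le_one (by linarith)]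
    refine ENNReal.ofReal_le_ofReal ?_
    have : (N : ℝ) * θ ≤ k * θ := mul_le_mul_of_nonneg_right (by exact_mod_cast hk) hθ
    linarith [Real.exp_le_exp.mpr this]
  have hmarkov := ENNReal.toReal_le_of_le_ofReal (by positivity)
    ((p.mul_toMeasure_add_one_le_tsum_mul .of_discrete hg hgs).trans hp)
  rw [ENNReal.toReal_add (by finiteness) ENNReal.one_ne_top, ENNReal.toReal_mul,
    ENNReal.toReal_ofReal (by linarith), ENNReal.toReal_one] at hmarkov
  linarith

noncomputable def poissonGF (r x : ℝ) : ℝ := Real.exp (r * (x - 1))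

lemma hasSum_pow_mul_poissonPMFReal (μ : ℝ≥0) (s : ℝ) :
    HasSum (fun n => s ^ n * poissonPMFReal μ n) (poissonGF μ s) := by
  have hser := NormedSpace.expSeries_div_hasSum_exp (s * (μ : ℝ))
  rw [← Real.exp_eq_exp_ℝ] at hser
  have hterm (n : ℕ) :
      s ^ n * poissonPMFReal μ n = Real.exp (-μ) * ((s * μ) ^ n / n.factorial) := by
    unfold poissonPMFReal
    rw [mul_pow]
    ring
  have hGF : poissonGF μ s = Real.exp (-μ) * Real.exp (s * μ) := by
    rw [poissonGF, ← Real.exp_add]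
    ring_nf
  rw [funext hterm, hGF]
  exact hser.mul_left _

lemma tsum_ofReal_pow_mul_poissonPMF (μ : ℝ≥0) {s : ℝ} (hs : 0 ≤ s) :
    ∑' n, ENNReal.ofReal (s ^ n) * poissonPMF μ n = ENNReal.ofReal (poissonGF μ s) := by
  have hsum := hasSum_pow_mul_poissonPMFReal μ s
  rw [← hsum.tsum_eq, ENNReal.ofReal_tsum_of_nonneg
    (fun n => mul_nonneg (pow_nonneg hs n) poissonPMFReal_nonneg) hsum.summable]
  refine tsum_congr fun n => ?_
  rw [ENNReal.ofReal_mul (pow_nonneg hs n), poissonPMFReal_ofReal_eq_poissonPMF]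

lemma tsum_ofReal_pow_mul_gwPoisson (r : ℝ≥0) (N j : ℕ) {s : ℝ} (hs : 0 ≤ s) :
    ∑' k, ENNReal.ofReal (s ^ k) * gwPoisson r N j k
      = ENNReal.ofReal ((poissonGF r)^[j] s ^ N) := by
  induction j generalizing s with
  | zero =>
    simp only [gwPoisson, PMF.pure_apply, mul_ite, mul_one, mul_zero, tsum_ite_eq,
      Function.iterate_zero, id_eq]
  | succ j ih =>
    rw [gwPoisson, PMF.tsum_mul_bind_apply, Function.iterate_succ_apply,
      ← ih (s := poissonGF r s) (Real.exp_pos _).le]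
    refine tsum_congr fun m => ?_
    rw [tsum_ofReal_pow_mul_poissonPMF _ hs, mul_comm, poissonGF, poissonGF, ← Real.exp_nat_mul]
    push_cast
    ring_nf

lemma iterate_sub_le_mul_pow {f : ℝ → ℝ} {c L B x₀ : ℝ} (hL : 1 ≤ L)
    (hf : ∀ x, c ≤ x → x ≤ c + B → c ≤ f x ∧ f x - c ≤ L * (x - c)) (hx₀ : c ≤ x₀) :
    ∀ {n : ℕ}, (x₀ - c) * L ^ n ≤ B → c ≤ f^[n] x₀ ∧ f^[n] x₀ - c ≤ (x₀ - c) * L ^ n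
  | 0, _ => by simpa using hx₀
  | n + 1, hB => by
    have hn : (x₀ - c) * L ^ n ≤ B :=
      le_trans (mul_le_mul_of_nonneg_left (pow_le_pow_right₀ hL n.le_succ) (by linarith)) hB
    obtain ⟨hc, hle⟩ := iterate_sub_le_mul_pow hL hf hx₀ hn
    obtain ⟨hfc, hfle⟩ := hf _ hc (by linarith)
    rw [Function.iterate_succ_apply']
    refine ⟨hfc, hfle.trans ?_⟩
    rw [pow_succ]
    nlinarith

lemma one_le_poissonGF {r x : ℝ} (hr : 0 ≤ r) (hx : 1 ≤ x) : 1 ≤ poissonGF r x :=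
  Real.one_le_exp (mul_nonneg hr (by linarith))

lemma poissonGF_sub_one_le {r B x : ℝ} (hr : 0 ≤ r) (hx : 1 ≤ x) (hxB : x ≤ 1 + B) :
    poissonGF r x - 1 ≤ r * Real.exp (r * B) * (x - 1) := by
  have hexp : poissonGF r x ≤ Real.exp (r * B) :=
    Real.exp_le_exp.mpr (mul_le_mul_of_nonneg_left (by linarith) hr)
  calc poissonGF r x - 1 ≤ r * (x - 1) * poissonGF r x := Real.exp_sub_one_le_mul_exp _
    _ ≤ r * (x - 1) * Real.exp (r * B) := by gcongr
    _ = r * Real.exp (r * B) * (x - 1) := by ring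

lemma iterate_poissonGF_le (ε : ℝ) (hε0 : 0 < ε) (hε1 : ε < 1 / 10) (r : ℝ≥0)
    (hr : (r : ℝ) = 1 + ε) (t : ℕ) (ht : 1 ≤ t) (hεt : ε * t < 1 / 10) :
    (poissonGF r)^[t] (Real.exp (1 / (20 * t))) ≤ 1 + 1 / (10 * t) := by
  have htpos : (0 : ℝ) < t := by exact_mod_cast ht
  set θ : ℝ := 1 / (20 * t) with hθ
  have hθ0 : 0 < θ := by positivity
  have hθ1 : θ ≤ 1 / 20 := by
    rw [hθ, div_le_div_iff₀ (by positivity) (by norm_num)]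
    norm_num
    exact_mod_cast ht
  set B : ℝ := 1 / (10 * t) with hBdef
  have hB : B = 2 * θ := by rw [hθ, hBdef]; field_simp; ring
  set L : ℝ := r * Real.exp (r * B)
  have hL : 1 ≤ L := one_le_mul_of_one_le_of_one_le (by rw [hr]; linarith)
    (Real.one_le_exp (by positivity))
  have hLt : L ^ t ≤ Real.exp (ε * t + r / 10) := by
    have hr_le : (r : ℝ) ≤ Real.exp ε := by rw [hr, add_comm]; exact Real.add_one_le_exp ε
    calc L ^ t = r ^ t * Real.exp (r * B * t) := by
          rw [mul_pow, ← Real.exp_nat_mul, mul_comm _ (r * B)]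
      _ ≤ Real.exp ε ^ t * Real.exp (r * B * t) := by gcongr
      _ = Real.exp (ε * t + r / 10) := by
        rw [← Real.exp_nat_mul, ← Real.exp_add, hBdef]; congr 1; field_simp
  have hstart : Real.exp θ - 1 ≤ θ * Real.exp θ := Real.exp_sub_one_le_mul_exp θ
  have hbound : (Real.exp θ - 1) * L ^ t ≤ B := by
    have hsum : θ + (ε * t + r / 10) ≤ 26 / 100 := by rw [hr]; linarith
    have h26 : Real.exp (26 / 100) ≤ 2 := by
      have := Real.exp_bound_div_one_sub_of_interval (x := 26 / 100) (by norm_num) (by norm_num)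
      linarith [show (1 : ℝ) / (1 - 26 / 100) ≤ 2 by norm_num]
    calc (Real.exp θ - 1) * L ^ t ≤ θ * Real.exp θ * Real.exp (ε * t + r / 10) :=
          mul_le_mul hstart hLt (by positivity) (by positivity)
      _ = θ * Real.exp (θ + (ε * t + r / 10)) := by rw [Real.exp_add θ]; ring
      _ ≤ θ * 2 := by
          gcongr
          exact (Real.exp_le_exp.mpr hsum).trans h26
      _ = B := by rw [hB]; ring
  have := (iterate_sub_le_mul_pow (f := poissonGF r) hL
    (fun x hx hxB => ⟨one_le_poissonGF r.2 hx, poissonGF_sub_one_le r.2 hx hxB⟩)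
    (Real.one_le_exp hθ0.le) hbound).2
  linarith

/-- for a Poisson(1+ε) Galton–Watson process with `0 < ε < 1/10` started with
one particle, if `t ≥ 1` and `εt < 1/10` then `E e^{|X_t|/(20t)} ≤ 1 + 1/(10t)`, and
consequently `P(|X_t| ≥ N) ≤ t⁻¹ e^{-N/(20t)}` for all `N ≥ 20t`. -/
theorem gw_mgf_and_tail_bound (ε : ℝ) (hε0 : 0 < ε) (hε1 : ε < 1 / 10)
    (r : NNReal) (hr : (r : ℝ) = 1 + ε) (t : ℕ) (ht : 1 ≤ t) (hεt : ε * (t : ℝ) < 1 / 10) :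
    (∑' k : ℕ, Real.exp ((k : ℝ) / (20 * (t : ℝ))) * ((gwPoisson r 1 t) k).toReal)
        ≤ 1 + 1 / (10 * (t : ℝ)) ∧
      ∀ N : ℕ, 20 * (t : ℝ) ≤ (N : ℝ) →
        ((gwPoisson r 1 t).toMeasure {k | N ≤ k}).toReal
          ≤ ((t : ℝ))⁻¹ * Real.exp (-((N : ℝ) / (20 * (t : ℝ)))) := by
  have htpos : (0 : ℝ) < t := by exact_mod_cast ht
  set θ : ℝ := 1 / (20 * t) with hθ
  have hdiv (k : ℕ) : (k : ℝ) / (20 * t) = k * θ := div_eq_mul_one_div _ _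
  have hmgf : ∑' k : ℕ, ENNReal.ofReal (Real.exp (k * θ)) * gwPoisson r 1 t k
      ≤ ENNReal.ofReal (1 + 1 / (10 * t)) := by
    simp_rw [Real.exp_nat_mul]
    rw [tsum_ofReal_pow_mul_gwPoisson r 1 t (Real.exp_pos θ).le, pow_one]
    exact ENNReal.ofReal_le_ofReal (iterate_poissonGF_le ε hε0 hε1 r hr t ht hεt)
  refine ⟨?_, fun N hN => ?_⟩
  · calc ∑' k : ℕ, Real.exp ((k : ℝ) / (20 * t)) * (gwPoisson r 1 t k).toReal
        = (∑' k : ℕ, ENNReal.ofReal (Real.exp (k * θ)) * gwPoisson r 1 t k).toReal := by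
          rw [ENNReal.tsum_toReal_eq fun k =>
            ENNReal.mul_ne_top ENNReal.ofReal_ne_top (PMF.apply_ne_top _ k)]
          simp [hdiv, ENNReal.toReal_mul, (Real.exp_pos _).le]
      _ ≤ 1 + 1 / (10 * t) := ENNReal.toReal_le_of_le_ofReal (by positivity) hmgf
  · have hchernoff := (gwPoisson r 1 t).exp_sub_one_mul_toReal_toMeasure_le (by positivity)
      (by positivity) hmgf N
    have hE : 2 ≤ Real.exp (N * θ) := by
      have : 1 ≤ (N : ℝ) * θ := by rw [hθ, mul_one_div, le_div_iff₀ (by positivity)]; linarith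
      linarith [Real.add_one_le_exp (N * θ)]
    have hq : 0 ≤ ((gwPoisson r 1 t).toMeasure {k | N ≤ k}).toReal := ENNReal.toReal_nonneg
    have hscaled := mul_le_mul_of_nonneg_right hchernoff (by positivity : (0 : ℝ) ≤ 10 * t)
    rw [one_div, inv_mul_cancel₀ (by positivity)] at hscaled
    rw [hdiv, Real.exp_neg, ← mul_inv, ← one_div, le_div_iff₀ (by positivity)]
    nlinarith [mul_nonneg (mul_nonneg hq htpos.le) (sub_nonneg.2 hE)]
end

section
/- Let λ = 1 + ε with ε > 0 sufficiently small, let s solve 1 − s = e^{−λs} and λ* = λ(1−s). Then λ* = 1 − ε + (2/3)ε² − (4/9)ε³ + O(ε⁴) as ε → 0⁺. -/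
/-!
Substituting `u = λ s`, the equation `1 - s = e^{-λ s}` becomes `g(u) = 0` for the concave
function `g(u) = λ (1 - e^{-u}) - u`, and `λ* = λ - u`. Since `g(0) = 0`, the positive zero `u`
is where `g` changes sign. The cubic `u₀ = 2ε - 2ε²/3 + 4ε³/9` has `g(u₀) = O(ε⁵)` while
`g'(u₀) = λ e^{-u₀} - 1 ≤ -ε/2`, so `g` changes sign inside `[u₀ - 8ε⁴, u₀ + 8ε⁴]`; finally
`λ* - (1 - ε + 2ε²/3 - 4ε³/9) = u₀ - u`.
-/

open Real Set

section ConcaveZeros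

variable {𝕜 : Type*} [Field 𝕜] [LinearOrder 𝕜] [IsStrictOrderedRing 𝕜]
  {s : Set 𝕜} {f : 𝕜 → 𝕜} {p r x : 𝕜}

theorem ConcaveOn.lt_of_apply_pos (hf : ConcaveOn 𝕜 s f) (hp : p ∈ s) (hr : r ∈ s) (hx : x ∈ s)
    (hpr : p < r) (hpx : p < x) (hfp : f p = 0) (hfr : f r = 0) (hfx : 0 < f x) : x < r := by
  by_contra! hrx
  have h := hf.antitoneOn_slope_gt hp ⟨hr, hpr⟩ ⟨hx, hpx⟩ hrx
  rw [slope_def_field, slope_def_field, hfp, hfr] at h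
  simp only [sub_zero, zero_div] at h
  exact (div_pos hfx (sub_pos.2 hpx)).not_ge h

theorem ConcaveOn.lt_of_apply_neg (hf : ConcaveOn 𝕜 s f) (hp : p ∈ s) (hr : r ∈ s) (hx : x ∈ s)
    (hpr : p < r) (hpx : p < x) (hfp : f p = 0) (hfr : f r = 0) (hfx : f x < 0) : r < x := by
  by_contra! hxr
  have h := hf.antitoneOn_slope_gt hp ⟨hx, hpx⟩ ⟨hr, hpr⟩ hxr
  rw [slope_def_field, slope_def_field, hfp, hfr] at h
  simp only [sub_zero, zero_div] at h
  exact (div_neg_of_neg_of_pos hfx (sub_pos.2 hpx)).not_ge h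

end ConcaveZeros

theorem abs_exp_sub_taylor_four_le {x : ℝ} (hx : |x| ≤ 1) :
    |exp x - (1 + x + x ^ 2 / 2 + x ^ 3 / 6 + x ^ 4 / 24)| ≤ |x| ^ 5 / 100 := by
  have h := Real.exp_bound hx (n := 5) (by norm_num)
  norm_num [Finset.sum_range_succ, Nat.factorial] at h
  convert h using 3; ring

noncomputable def survivalResidual (lam u : ℝ) : ℝ := lam * (1 - exp (-u)) - u

section survivalResidual

variable {lam : ℝ}

theorem concaveOn_survivalResidual (hlam : 0 ≤ lam) : ConcaveOn ℝ univ (survivalResidual lam) := by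
  have hexp : ConvexOn ℝ univ (fun u : ℝ => exp (-u)) := convexOn_exp.comp_linearMap (-LinearMap.id)
  refine (((hexp.smul hlam).neg.add_const lam).sub (convexOn_id convex_univ)).congr fun u _ => ?_
  simp only [survivalResidual, Pi.sub_apply, Pi.add_apply, Pi.neg_apply, smul_eq_mul, id]
  ring

theorem survivalResidual_add_le (hlam : 0 ≤ lam) (u h : ℝ) :
    survivalResidual lam (u + h) ≤ survivalResidual lam u - (1 - lam * exp (-u)) * h := by
  have hexp : 1 - h ≤ exp (-h) := by linarith [add_one_le_exp (-h)]
  have := mul_le_mul_of_nonneg_left hexp (by positivity : 0 ≤ lam * exp (-u))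
  rw [survivalResidual, survivalResidual, neg_add, exp_add]
  linarith

theorem le_survivalResidual_sub (hlam : 0 ≤ lam) (u : ℝ) {h : ℝ} (hh : |h| ≤ 1) :
    survivalResidual lam u + (1 - lam * exp (-u)) * h - lam * exp (-u) * h ^ 2
      ≤ survivalResidual lam (u - h) := by
  have hexp : exp h ≤ 1 + h + h ^ 2 := by linarith [(abs_le.1 (abs_exp_sub_one_sub_id_le hh)).2]
  have := mul_le_mul_of_nonneg_left hexp (by positivity : 0 ≤ lam * exp (-u))
  rw [survivalResidual, survivalResidual, neg_sub', sub_neg_eq_add, exp_add]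
  nlinarith

theorem abs_sub_lt_of_survivalResidual_eq_zero (hlam : 0 ≤ lam) {u x h κ : ℝ} (hu : 0 < u)
    (hres : survivalResidual lam u = 0) (hh : 0 < h) (hhx : h < x) (hh1 : h ≤ 1)
    (hA : lam * exp (-x) ≤ 1 - κ) (hgx : |survivalResidual lam x| < κ * h - h ^ 2) :
    |u - x| < h := by
  obtain ⟨hgx_lo, hgx_hi⟩ := abs_lt.1 hgx
  have hκ : 0 ≤ κ := by nlinarith [abs_nonneg (survivalResidual lam x)]
  have hconc := concaveOn_survivalResidual hlam
  have hzero : survivalResidual lam 0 = 0 := by simp [survivalResidual]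
  have hbelow : 0 < survivalResidual lam (x - h) := by
    have := le_survivalResidual_sub hlam x (abs_le.2 ⟨by linarith, hh1⟩)
    nlinarith [mul_le_mul_of_nonneg_right hA hh.le, sq_nonneg h]
  have habove : survivalResidual lam (x + h) < 0 := by
    have := survivalResidual_add_le hlam x h
    nlinarith [mul_le_mul_of_nonneg_right hA hh.le]
  rw [abs_sub_lt_iff]
  constructor
  · linarith [hconc.lt_of_apply_neg (mem_univ 0) (mem_univ u) (mem_univ _) hu
      (by linarith) hzero hres habove]
  · linarith [hconc.lt_of_apply_pos (mem_univ 0) (mem_univ u) (mem_univ _) hu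
      (by linarith) hzero hres hbelow]

end survivalResidual

noncomputable def scaledSurvivalApprox (ε : ℝ) : ℝ := 2 * ε - 2 / 3 * ε ^ 2 + 4 / 9 * ε ^ 3

section Approx

variable {ε : ℝ}

theorem scaledSurvivalApprox_mem_Icc (h0 : 0 < ε) (h1 : ε ≤ 1 / 100) :
    scaledSurvivalApprox ε ∈ Icc ε (2 * ε) := by
  unfold scaledSurvivalApprox
  constructor <;> nlinarith

theorem abs_taylorSurvivalResidual_scaledSurvivalApprox_le (h0 : 0 < ε) (h1 : ε ≤ 1 / 100) :
    |(1 + ε) * (1 - (1 - scaledSurvivalApprox ε + scaledSurvivalApprox ε ^ 2 / 2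
      - scaledSurvivalApprox ε ^ 3 / 6 + scaledSurvivalApprox ε ^ 4 / 24))
      - scaledSurvivalApprox ε| ≤ ε ^ 5 := by
  -- the coefficients of `ε⁰, …, ε⁴` cancel: this is what determines `scaledSurvivalApprox`
  have key : (1 + ε) * (1 - (1 - scaledSurvivalApprox ε + scaledSurvivalApprox ε ^ 2 / 2
      - scaledSurvivalApprox ε ^ 3 / 6 + scaledSurvivalApprox ε ^ 4 / 24))
      - scaledSurvivalApprox ε = ε ^ 5 * (-16 / 27 + 20 / 27 * ε - 64 / 81 * ε ^ 2
        + 14 / 27 * ε ^ 3 - 658 / 2187 * ε ^ 4 + 256 / 2187 * ε ^ 5 - 272 / 6561 * ε ^ 6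
        + 160 / 19683 * ε ^ 7 - 32 / 19683 * ε ^ 8) := by
    unfold scaledSurvivalApprox; ring
  have hpow := fun n => pow_pos h0 n
  rw [key, abs_mul, abs_of_pos (hpow 5)]
  refine mul_le_of_le_one_right (hpow 5).le (abs_le.2 ⟨?_, ?_⟩)
  · nlinarith [hpow 2, hpow 3, hpow 4, hpow 5, hpow 6, hpow 7, hpow 8]
  · nlinarith [hpow 2, hpow 3, hpow 4, hpow 5, hpow 6, hpow 7, hpow 8]

theorem abs_survivalResidual_scaledSurvivalApprox_le (h0 : 0 < ε) (h1 : ε ≤ 1 / 100) :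
    |survivalResidual (1 + ε) (scaledSurvivalApprox ε)| ≤ 2 * ε ^ 5 := by
  set x := scaledSurvivalApprox ε
  obtain ⟨hεx, hx2ε⟩ := scaledSurvivalApprox_mem_Icc h0 h1
  have hx : |-x| = x := by rw [abs_neg, abs_of_nonneg (by linarith)]
  have hexp := abs_exp_sub_taylor_four_le (x := -x) (by rw [hx]; linarith)
  rw [hx] at hexp
  have hx5 : x ^ 5 ≤ (2 * ε) ^ 5 := pow_le_pow_left₀ (by linarith) hx2ε 5
  calc |survivalResidual (1 + ε) x|
      = |((1 + ε) * (1 - (1 - x + x ^ 2 / 2 - x ^ 3 / 6 + x ^ 4 / 24)) - x)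
          - (1 + ε) * (exp (-x) - (1 + -x + (-x) ^ 2 / 2 + (-x) ^ 3 / 6 + (-x) ^ 4 / 24))| := by
        unfold survivalResidual; ring_nf
    _ ≤ ε ^ 5 + (1 + ε) * (x ^ 5 / 100) := by
        refine (abs_sub _ _).trans
          (add_le_add (abs_taylorSurvivalResidual_scaledSurvivalApprox_le h0 h1) ?_)
        rw [abs_mul, abs_of_pos (by linarith)]
        exact mul_le_mul_of_nonneg_left hexp (by linarith)
    _ ≤ 2 * ε ^ 5 := by nlinarith [pow_pos h0 5]

theorem abs_sub_scaledSurvivalApprox_lt (h0 : 0 < ε) (h1 : ε ≤ 1 / 100) {u : ℝ} (hu : 0 < u)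
    (hres : survivalResidual (1 + ε) u = 0) : |u - scaledSurvivalApprox ε| < 8 * ε ^ 4 := by
  have hεx := (scaledSurvivalApprox_mem_Icc h0 h1).1
  have hgx := abs_survivalResidual_scaledSurvivalApprox_le h0 h1
  have hA : (1 + ε) * exp (-scaledSurvivalApprox ε) ≤ 1 - ε / 2 := by
    have hA_eq : (1 + ε) * exp (-scaledSurvivalApprox ε) = 1 + ε - scaledSurvivalApprox ε
        - survivalResidual (1 + ε) (scaledSurvivalApprox ε) := by
      rw [survivalResidual]; ring
    have hg := (abs_le.1 hgx).1
    rw [hA_eq]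
    generalize survivalResidual (1 + ε) (scaledSurvivalApprox ε) = g at hg ⊢
    unfold scaledSurvivalApprox
    nlinarith [mul_le_mul_of_nonneg_left (pow_le_pow_left₀ h0.le h1 4) h0.le, pow_pos h0 3]
  refine abs_sub_lt_of_survivalResidual_eq_zero (by linarith) hu hres (by positivity) ?_ ?_ hA ?_
  · nlinarith [pow_pos h0 2, pow_pos h0 3]
  · nlinarith [pow_pos h0 2, pow_pos h0 3]
  · refine hgx.trans_lt ?_
    have hε3 : ε ^ 3 ≤ 1 / 64 := by nlinarith [pow_le_pow_left₀ h0.le h1 3]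
    nlinarith [mul_le_mul_of_nonneg_left hε3 (pow_pos h0 5).le, pow_pos h0 5]

end Approx

/-- for `λ = 1 + ε` with `ε → 0⁺`, the dual parameter `λ* = λ(1-s)`, where `s`
solves `1 - s = e^{-λs}`, satisfies `λ* = 1 - ε + (2/3)ε² - (4/9)ε³ + O(ε⁴)`. -/
theorem dual_parameter_expansion :
    ∃ C ε₀ : ℝ, 0 < C ∧ 0 < ε₀ ∧
      ∀ ε : ℝ, 0 < ε → ε < ε₀ → ∀ s lamstar : ℝ,
        0 < s → s < 1 → 1 - s = Real.exp (-((1 + ε) * s)) →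
        lamstar = (1 + ε) * (1 - s) →
        |lamstar - (1 - ε + (2 / 3) * ε ^ 2 - (4 / 9) * ε ^ 3)| ≤ C * ε ^ 4 := by
  refine ⟨8, 1 / 100, by norm_num, by norm_num, ?_⟩
  intro ε hε hε₀ s lamstar hs _ heq hlamstar
  have hres : survivalResidual (1 + ε) ((1 + ε) * s) = 0 := by
    rw [survivalResidual, ← heq]; ring
  have hu := abs_sub_scaledSurvivalApprox_lt hε hε₀.le (by positivity) hres
  calc |lamstar - (1 - ε + (2 / 3) * ε ^ 2 - (4 / 9) * ε ^ 3)|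
      = |(1 + ε) * s - scaledSurvivalApprox ε| := by
        rw [hlamstar, scaledSurvivalApprox, ← abs_neg]; ring_nf
    _ ≤ 8 * ε ^ 4 := hu.le
end
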